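/- Let d ≥ 1, ω ∈ ℝ^d, let q : ℝ × ℝ^d → SO(3) be of class C², 2π-periodic in θ and in each component of φ, with q(0,φ) = I for all φ, and let b be a constant real skew-symmetric 3×3 matrix. Define 𝒜 := (𝒟q + qb)qᵀ. Then a uniform invariant frame field exists for 𝒜: there are a C¹ map 𝒱 : ℝ × ℝ^d → SO(3), 2π-periodic in θ and in each component of φ, and a constant ν ∈ [0,1) with 𝒟𝒱 = 𝒜𝒱 − ν𝒱𝒥. -/

import Mathlib

open MeasureTheory Filter
noncomputable section

/-- The matrix 𝒥: (2,1)-entry 1, (1,2)-entry −1, all other entries 0. -/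
def Jmat : Matrix (Fin 3) (Fin 3) ℝ := Matrix.of ![![0, -1, 0], ![1, 0, 0], ![0, 0, 0]]

/-- The special orthogonal group SO(3): RᵀR = I and det R = 1. -/
def SO3 : Set (Matrix (Fin 3) (Fin 3) ℝ) := {R | R.transpose * R = 1 ∧ R.det = 1}

/-- 2π-periodicity in each of the k arguments. -/
def Periodic2Pi {k : ℕ} {E : Type*} (F : (Fin k → ℝ) → E) : Prop :=
  ∀ (z : Fin k → ℝ) (i : Fin k), F (Function.update z i (z i + 2 * Real.pi)) = F z

/-- `f : ℝ → E` is quasiperiodic with tune vector `ν ∈ ℝ^k` if `f θ = F (νθ)` for a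
continuous `F` that is 2π-periodic in each argument. -/
def IsQuasiperiodic {E : Type*} [TopologicalSpace E] {k : ℕ} (ν : Fin k → ℝ) (f : ℝ → E) : Prop :=
  ∃ F : (Fin k → ℝ) → E, Continuous F ∧ Periodic2Pi F ∧ ∀ θ : ℝ, f θ = F fun i => ν i * θ

/-- integer dot product `m · v` -/
def zdot {k : ℕ} (m : Fin k → ℤ) (v : Fin k → ℝ) : ℝ := ∑ i, (m i : ℝ) * v i

/-- `ν` is nonresonant if `m · ν = 0` only for `m = 0`. -/
def Nonresonant {k : ℕ} (ν : Fin k → ℝ) : Prop :=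
  ∀ m : Fin k → ℤ, zdot m ν = 0 → m = 0

/-- Fourier coefficient `F_m = (2π)^{-k} ∫_{[0,2π]^k} F(z) e^{-i m·z} dz`. -/
def mFourierCoeff {k : ℕ} (F : (Fin k → ℝ) → ℂ) (m : Fin k → ℤ) : ℂ :=
  ((2 * Real.pi) ^ k : ℝ)⁻¹ •
    ∫ z in Set.Icc (0 : Fin k → ℝ) (fun _ => 2 * Real.pi),
      F z * Complex.exp (-Complex.I * ∑ i, (m i : ℝ) * z i)

/-- The phase space `ℝ × ℝ^d` of pairs `(θ, φ)`. -/
abbrev Pt (d : ℕ) := ℝ × (Fin d → ℝ)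

/-- The vector `(1, ω) ∈ ℝ^{d+1}`. -/
def oneOmega {d : ℕ} (ω : Fin d → ℝ) : Fin (d + 1) → ℝ := Fin.cons 1 ω

/-- max norm `‖m‖ = max_i |m_i|` of an integer vector. -/
def intNorm {k : ℕ} (m : Fin k → ℤ) : ℕ := Finset.univ.sup fun i => (m i).natAbs

/-- The Diophantine set `Ω(τ) = ⋃_{γ ∈ (0,1]} Ω(τ,γ)` where
`Ω(τ,γ) = {ω : |m·(1,ω)| ≥ γ‖m‖^{-τ} for all nonzero m ∈ ℤ^{d+1}}`. -/
def DiophSet (d : ℕ) (τ : ℝ) : Set (Fin d → ℝ) :=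
  ⋃ γ ∈ Set.Ioc (0 : ℝ) 1,
    {ω | ∀ m : Fin (d + 1) → ℤ, m ≠ 0 → γ * (intNorm m : ℝ) ^ (-τ) ≤ |zdot m (oneOmega ω)|}

/-- The derivation 𝒟 applied to the entries of a matrix-valued function:
`(𝒟V)(p) = ∂_θ V + ω·∇_φ V`, i.e. the directional derivative along `(1, ω)`. -/
def Dmat {d : ℕ} (ω : Fin d → ℝ) (V : Pt d → Matrix (Fin 3) (Fin 3) ℝ) (p : Pt d) :
    Matrix (Fin 3) (Fin 3) ℝ :=
  Matrix.of fun i j => fderiv ℝ (fun q => V q i j) p (1, ω)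

/-- Periodicity: 2π-periodic in θ and in each component of φ. -/
def PeriodicPt {d : ℕ} {E : Type*} (f : Pt d → E) : Prop :=
  (∀ p : Pt d, f (p.1 + 2 * Real.pi, p.2) = f p) ∧
  (∀ (p : Pt d) (i : Fin d), f (p.1, Function.update p.2 i (p.2 i + 2 * Real.pi)) = f p)

/-- A matrix-valued map on `ℝ × ℝ^d` is of class `C^n` (entrywise). -/
def SmoothMat {d : ℕ} (n : ℕ∞) (V : Pt d → Matrix (Fin 3) (Fin 3) ℝ) : Prop :=
  ∀ i j, ContDiff ℝ n fun p => V p i j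

/-- `Φ` is the principal solution matrix at `φ₀`:
`∂_θ Φ(θ) = 𝒜(θ, ωθ + φ₀) Φ(θ)`, `Φ(0) = I`. -/
def IsPrincipalSolution {d : ℕ} (ω : Fin d → ℝ) (𝒜 : Pt d → Matrix (Fin 3) (Fin 3) ℝ)
    (φ₀ : Fin d → ℝ) (Φ : ℝ → Matrix (Fin 3) (Fin 3) ℝ) : Prop :=
  Φ 0 = 1 ∧ ∀ (θ : ℝ) (i j : Fin 3),
    HasDerivAt (fun t => Φ t i j) ((𝒜 (θ, fun l => ω l * θ + φ₀ l) * Φ θ) i j) θ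

/-- A uniform invariant frame field: C¹, 2π-periodic, SO(3)-valued, satisfying
`𝒟𝒱 = 𝒜𝒱 − ν𝒱𝒥` for a constant `ν ∈ [0,1)`. -/
def IsUniformIFF {d : ℕ} (ω : Fin d → ℝ) (𝒜 V : Pt d → Matrix (Fin 3) (Fin 3) ℝ) (ν : ℝ) :
    Prop :=
  SmoothMat 1 V ∧ PeriodicPt V ∧ (∀ p, V p ∈ SO3) ∧ ν ∈ Set.Ico (0 : ℝ) 1 ∧
  ∀ p, Dmat ω V p = 𝒜 p * V p - ν • (V p * Jmat)

/-- An invariant frame field: C¹, 2π-periodic, SO(3)-valued, whose third column 𝔳³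
satisfies `𝒟𝔳³ = 𝒜𝔳³`. -/
def IsIFF {d : ℕ} (ω : Fin d → ℝ) (𝒜 V : Pt d → Matrix (Fin 3) (Fin 3) ℝ) : Prop :=
  SmoothMat 1 V ∧ PeriodicPt V ∧ (∀ p, V p ∈ SO3) ∧
  ∀ (p : Pt d) (i : Fin 3),
    fderiv ℝ (fun q => V q i 2) p (1, ω) = ((𝒜 p).mulVec fun j => V p j 2) i

/-- An invariant spin field: C¹, 2π-periodic, unit length, satisfying `𝒟n = 𝒜n`. -/
def IsISF {d : ℕ} (ω : Fin d → ℝ) (𝒜 : Pt d → Matrix (Fin 3) (Fin 3) ℝ)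
    (n : Pt d → Fin 3 → ℝ) : Prop :=
  (∀ i, ContDiff ℝ 1 fun p => n p i) ∧ PeriodicPt n ∧ (∀ p, ∑ i, n p i ^ 2 = 1) ∧
  ∀ (p : Pt d) (i : Fin 3), fderiv ℝ (fun q => n q i) p (1, ω) = ((𝒜 p).mulVec (n p)) i

/-- cross product on ℝ³ -/
def cross3 (u v : Fin 3 → ℝ) : Fin 3 → ℝ :=
  ![u 1 * v 2 - u 2 * v 1, u 2 * v 0 - u 0 * v 2, u 0 * v 1 - u 1 * v 0]

/-- Euclidean norm on ℝ³ -/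
def nrm3 (v : Fin 3 → ℝ) : ℝ := Real.sqrt (∑ i, v i ^ 2)

/-- normalization of a vector in ℝ³ -/
def unitize (v : Fin 3 → ℝ) : Fin 3 → ℝ := fun i => v i / nrm3 v

/-- the matrix with columns a, b, c -/
def colMat (a b c : Fin 3 → ℝ) : Matrix (Fin 3) (Fin 3) ℝ := (Matrix.of ![a, b, c]).transpose

/-! A skew-symmetric `b` is an infinitesimal rotation about its axis: there are `C ∈ SO(3)` and
`β ∈ ℝ` with `b C = β C 𝒥`. Let `R(x)` be the rotation by `x` about the third axis, so that
`R' = R 𝒥` and `R` commutes with `𝒥`, and put `𝒱 = q C R(kθ)` with `k = ⌊β⌋`. Since `qᵀq = I`,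
`𝒜𝒱 = (𝒟q) C R + q b C R = (𝒟q) C R + β 𝒱 𝒥`, while `𝒟𝒱 = (𝒟q) C R + k 𝒱 𝒥`, so
`𝒟𝒱 = 𝒜𝒱 − ν𝒱𝒥` with `ν = β − ⌊β⌋ ∈ [0, 1)`; the integrality of `k` keeps `𝒱` periodic in `θ`. -/

open Real Matrix

lemma SO3.mul_mem {A B : Matrix (Fin 3) (Fin 3) ℝ} (hA : A ∈ SO3) (hB : B ∈ SO3) :
    A * B ∈ SO3 := by
  refine ⟨?_, by rw [det_mul, hA.2, hB.2, one_mul]⟩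
  rw [transpose_mul, mul_assoc, ← mul_assoc Aᵀ, hA.1, one_mul, hB.1]

def rotZ (x : ℝ) : Matrix (Fin 3) (Fin 3) ℝ :=
  !![cos x, -sin x, 0; sin x, cos x, 0; 0, 0, 1]

lemma rotZ_mem_SO3 (x : ℝ) : rotZ x ∈ SO3 := by
  refine ⟨?_, ?_⟩
  · ext i j
    fin_cases i <;> fin_cases j <;> simp [rotZ, mul_apply, Fin.sum_univ_three] <;>
      nlinarith [sin_sq_add_cos_sq x]
  · simp [rotZ, det_fin_three]
    nlinarith [sin_sq_add_cos_sq x]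

lemma Jmat_mul_rotZ (x : ℝ) : Jmat * rotZ x = rotZ x * Jmat := by
  ext i j
  fin_cases i <;> fin_cases j <;> simp [rotZ, Jmat, mul_apply, Fin.sum_univ_three]

lemma rotZ_add_int_mul_two_pi (x : ℝ) (n : ℤ) : rotZ (x + n * (2 * π)) = rotZ x := by
  simp [rotZ, cos_add_int_mul_two_pi, sin_add_int_mul_two_pi]

lemma hasDerivAt_rotZ_apply (x : ℝ) (i j : Fin 3) :
    HasDerivAt (fun t => rotZ t i j) ((rotZ x * Jmat) i j) x := by
  fin_cases i <;> fin_cases j <;> simp [rotZ, Jmat, mul_apply, Fin.sum_univ_three]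
  all_goals first
    | exact hasDerivAt_cos x
    | exact hasDerivAt_sin x
    | exact (hasDerivAt_sin x).neg
    | exact hasDerivAt_const x _

lemma contDiff_rotZ_apply (n : ℕ∞) (i j : Fin 3) : ContDiff ℝ n fun t => rotZ t i j := by
  fin_cases i <;> fin_cases j <;> simp [rotZ]
  all_goals first
    | exact contDiff_cos
    | exact contDiff_sin
    | exact contDiff_sin.neg
    | exact contDiff_const

lemma exists_mem_SO3_mul_eq_smul_mul_Jmat_of_axis (a v c : ℝ) :
    ∃ C ∈ SO3, ∃ β : ℝ, !![0, -c, v; c, 0, -a; -v, a, 0] * C = β • (C * Jmat) := by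
  by_cases hav : a = 0 ∧ v = 0
  · obtain ⟨rfl, rfl⟩ := hav
    refine ⟨1, ⟨by simp, by simp⟩, c, ?_⟩
    ext i j
    fin_cases i <;> fin_cases j <;> simp [Jmat, mul_apply, Fin.sum_univ_three]
  have hs2pos : 0 < a ^ 2 + v ^ 2 := by
    rcases not_and_or.mp hav with h | h <;> positivity
  obtain ⟨s, hs, hs2⟩ : ∃ s : ℝ, s ≠ 0 ∧ s ^ 2 = a ^ 2 + v ^ 2 :=
    ⟨√(a ^ 2 + v ^ 2), (sqrt_pos.2 hs2pos).ne', sq_sqrt hs2pos.le⟩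
  obtain ⟨β, hβ, hβ2⟩ : ∃ β : ℝ, β ≠ 0 ∧ β ^ 2 = s ^ 2 + c ^ 2 :=
    ⟨√(s ^ 2 + c ^ 2), (sqrt_pos.2 (by positivity)).ne', sq_sqrt (by positivity)⟩
  -- columns: a unit vector orthogonal to the axis `(a, v, c)`, the axis cross it, the unit axis
  refine ⟨!![-v / s, -(a * c) / (β * s), a / β; a / s, -(v * c) / (β * s), v / β;
    0, s / β, c / β], ⟨?_, ?_⟩, β, ?_⟩
  · ext i j
    fin_cases i <;> fin_cases j <;> simp [mul_apply, Fin.sum_univ_three] <;> field_simp <;> grind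
  · simp [det_fin_three]
    field_simp
    grind
  · ext i j
    fin_cases i <;> fin_cases j <;> simp [Jmat, mul_apply, Fin.sum_univ_three] <;>
      field_simp <;> grind

lemma exists_mem_SO3_mul_eq_smul_mul_Jmat {b : Matrix (Fin 3) (Fin 3) ℝ} (hb : bᵀ = -b) :
    ∃ C ∈ SO3, ∃ β : ℝ, b * C = β • (C * Jmat) := by
  have hskew : ∀ i j, b j i = -b i j := fun i j => by
    simpa using congrFun (congrFun hb i) j
  have hb_eq : b = !![0, -(b 1 0), b 0 2; b 1 0, 0, -(b 2 1); -(b 0 2), b 2 1, 0] := by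
    ext i j
    fin_cases i <;> fin_cases j <;> simp <;> linarith [hskew 0 0, hskew 1 1, hskew 2 2,
      hskew 0 1, hskew 0 2, hskew 1 2]
  rw [hb_eq]
  exact exists_mem_SO3_mul_eq_smul_mul_Jmat_of_axis _ _ _

section Derivation

variable {d : ℕ}

lemma SmoothMat.mul {n : ℕ∞} {V W : Pt d → Matrix (Fin 3) (Fin 3) ℝ} (hV : SmoothMat n V)
    (hW : SmoothMat n W) : SmoothMat n fun p => V p * W p := fun i j => by
  simp only [mul_apply]
  exact ContDiff.sum fun l _ => (hV i l).mul (hW l j)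

lemma PeriodicPt.mul {E : Type*} [Mul E] {f g : Pt d → E} (hf : PeriodicPt f)
    (hg : PeriodicPt g) : PeriodicPt fun p => f p * g p :=
  ⟨fun p => by simp only [hf.1 p, hg.1 p], fun p i => by simp only [hf.2 p i, hg.2 p i]⟩

variable (ω : Fin d → ℝ) (p : Pt d)

lemma Dmat_const (M : Matrix (Fin 3) (Fin 3) ℝ) : Dmat ω (fun _ => M) p = 0 := by
  ext i j
  simp [Dmat]

lemma Dmat_comp_fst {g : ℝ → Matrix (Fin 3) (Fin 3) ℝ} {g' : Matrix (Fin 3) (Fin 3) ℝ}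
    (hg : ∀ i j, HasDerivAt (fun t => g t i j) (g' i j) p.1) :
    Dmat ω (fun p => g p.1) p = g' := by
  ext i j
  have h : HasFDerivAt (fun q : Pt d => g q.1 i j) ((g' i j) • ContinuousLinearMap.fst ℝ ℝ _) p :=
    (hg i j).comp_hasFDerivAt p hasFDerivAt_fst
  simp [Dmat, h.fderiv]

lemma Dmat_mul {V W : Pt d → Matrix (Fin 3) (Fin 3) ℝ}
    (hV : ∀ i j, DifferentiableAt ℝ (fun p => V p i j) p)
    (hW : ∀ i j, DifferentiableAt ℝ (fun p => W p i j) p) :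
    Dmat ω (fun p => V p * W p) p = Dmat ω V p * W p + V p * Dmat ω W p := by
  ext i j
  have hprod : HasFDerivAt (fun q => ∑ l, V q i l * W q l j)
      (∑ l, (V p i l • fderiv ℝ (fun q => W q l j) p + W p l j • fderiv ℝ (fun q => V q i l) p))
      p :=
    HasFDerivAt.fun_sum fun l _ => (hV i l).hasFDerivAt.mul (hW l j).hasFDerivAt
  simp only [Dmat, of_apply, mul_apply, Matrix.add_apply]
  rw [hprod.fderiv]
  simp [Finset.sum_add_distrib, mul_comm, add_comm]

end Derivation

section SpinFrame

variable {d : ℕ} (C : Matrix (Fin 3) (Fin 3) ℝ) (k : ℝ)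

def spinFrame (p : Pt d) : Matrix (Fin 3) (Fin 3) ℝ := C * rotZ (k * p.1)

lemma spinFrame_mem_SO3 (hC : C ∈ SO3) (p : Pt d) :
    spinFrame C k p ∈ SO3 :=
  SO3.mul_mem hC (rotZ_mem_SO3 _)

lemma smoothMat_spinFrame (n : ℕ∞) : SmoothMat n (spinFrame (d := d) C k) :=
  SmoothMat.mul (fun _ _ => contDiff_const) fun i j =>
    (contDiff_rotZ_apply n i j).comp (contDiff_const.mul contDiff_fst)

lemma periodicPt_spinFrame (k : ℤ) : PeriodicPt (spinFrame (d := d) C k) := by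
  refine ⟨fun p => ?_, fun p i => rfl⟩
  simp only [spinFrame, mul_add, ← rotZ_add_int_mul_two_pi (k * p.1) k]

lemma Dmat_spinFrame (ω : Fin d → ℝ) (p : Pt d) :
    Dmat ω (spinFrame C k) p = k • (spinFrame C k p * Jmat) := by
  have hR : ∀ i j,
      HasDerivAt (fun t => rotZ (k * t) i j) ((k • (rotZ (k * p.1) * Jmat)) i j) p.1 :=
    fun i j => by
      simpa [Function.comp_def, mul_comm k] using
        (hasDerivAt_rotZ_apply (k * p.1) i j).comp p.1 ((hasDerivAt_id p.1).const_mul k)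
  have hdiff : ∀ i j, DifferentiableAt ℝ (fun p : Pt d => rotZ (k * p.1) i j) p := fun i j =>
    ((hR i j).comp_hasFDerivAt p hasFDerivAt_fst).differentiableAt
  unfold spinFrame
  rw [Dmat_mul (V := fun _ => C) ω p (fun _ _ => differentiableAt_const _) hdiff, Dmat_const,
    Dmat_comp_fst ω p hR, zero_mul, zero_add, Matrix.mul_smul, mul_assoc]

lemma mul_spinFrame_of_mul_eq {b : Matrix (Fin 3) (Fin 3) ℝ} {β : ℝ}
    (hbC : b * C = β • (C * Jmat)) (p : Pt d) :
    b * spinFrame C k p = β • (spinFrame C k p * Jmat) := by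
  rw [spinFrame, ← mul_assoc, hbC, smul_mul, mul_assoc, Jmat_mul_rotZ, ← mul_assoc]

end SpinFrame

theorem uniform_IFF_exists_for_conjugated_generator_general {d : ℕ} (ω : Fin d → ℝ)
    (q : Pt d → Matrix (Fin 3) (Fin 3) ℝ)
    (hqs : SmoothMat 2 q) (hqper : PeriodicPt q) (hqSO3 : ∀ p, q p ∈ SO3)
    (b : Matrix (Fin 3) (Fin 3) ℝ) (hb : b.transpose = -b) :
    ∃ (𝒱 : Pt d → Matrix (Fin 3) (Fin 3) ℝ) (ν : ℝ),
      IsUniformIFF ω (fun p => (Dmat ω q p + q p * b) * (q p).transpose) 𝒱 ν := by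
  obtain ⟨C, hC, β, hbC⟩ := exists_mem_SO3_mul_eq_smul_mul_Jmat hb
  set W : Pt d → Matrix (Fin 3) (Fin 3) ℝ := spinFrame C ⌊β⌋
  have hq1 : SmoothMat 1 q := fun i j => (hqs i j).of_le (by norm_num)
  refine ⟨fun p => q p * W p, Int.fract β, hq1.mul (smoothMat_spinFrame C _ 1),
    hqper.mul (periodicPt_spinFrame C _),
    fun p => SO3.mul_mem (hqSO3 p) (spinFrame_mem_SO3 C _ hC p),
    ⟨Int.fract_nonneg β, Int.fract_lt_one β⟩, fun p => ?_⟩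
  have hgen : (Dmat ω q p + q p * b) * (q p)ᵀ * (q p * W p)
      = Dmat ω q p * W p + β • (q p * W p * Jmat) := by
    rw [mul_assoc, ← mul_assoc (q p)ᵀ, (hqSO3 p).1, one_mul, add_mul, mul_assoc,
      mul_spinFrame_of_mul_eq C _ hbC, Matrix.mul_smul, mul_assoc]
  rw [Dmat_mul ω p (fun i j => (hq1 i j).differentiable one_ne_zero p)
      (fun i j => (smoothMat_spinFrame C _ 1 i j).differentiable one_ne_zero p),
    Dmat_spinFrame, hgen, Matrix.mul_smul, ← mul_assoc]
  linear_combination (norm := module) (Int.floor_add_fract β) • (q p * W p * Jmat)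

/-- Theorem 6.7. -/
theorem uniform_IFF_exists_for_conjugated_generator {d : ℕ} (hd : 1 ≤ d) (ω : Fin d → ℝ)
    (q : Pt d → Matrix (Fin 3) (Fin 3) ℝ)
    (hqs : SmoothMat 2 q) (hqper : PeriodicPt q) (hqSO3 : ∀ p, q p ∈ SO3)
    (hq0 : ∀ φ : Fin d → ℝ, q (0, φ) = 1)
    (b : Matrix (Fin 3) (Fin 3) ℝ) (hb : b.transpose = -b) :
    ∃ (𝒱 : Pt d → Matrix (Fin 3) (Fin 3) ℝ) (ν : ℝ),
      IsUniformIFF ω (fun p => (Dmat ω q p + q p * b) * (q p).transpose) 𝒱 ν :=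
  uniform_IFF_exists_for_conjugated_generator_general ω q hqs hqper hqSO3 b hb
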